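/- arXiv:1706.00165 — 6 statements merged into one kernel-verified Lean document; each statement's English description precedes it below -/
import Mathlib

section
/- For every n ≥ 1, the Catalan numbers satisfy the inverse composition identity C_{n-1} = Σ_{m=1}^n (-1)^{m+1} Σ_{k_1+...+k_m = n, k_i ≥ 1} C_{k_1} C_{k_2} ··· C_{k_m}. -/
open Finset

/-- Map adding a first block of size `n - k` to a composition of `k < n`. -/
def consComp (n : ℕ) (x : Σ k : Fin n, Composition (k : ℕ)) : Composition n where
  blocks := (n - (x.1 : ℕ)) :: x.2.blocks
  blocks_pos := by
    intro i hi
    rcases List.mem_cons.1 hi with h | h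
    · have := x.1.2; omega
    · exact x.2.blocks_pos h
  blocks_sum := by
    have := x.2.blocks_sum
    have := x.1.2
    simp [this]

theorem consComp_bijective (n : ℕ) (hn : 1 ≤ n) : Function.Bijective (consComp n) := by
  constructor
  · rintro ⟨⟨a, ha⟩, c₁⟩ ⟨⟨b, hb⟩, c₂⟩ h
    have hbl : (n - a) :: c₁.blocks = (n - b) :: c₂.blocks :=
      congrArg Composition.blocks h
    have h1 : n - a = n - b := (List.cons.injEq _ _ _ _ ▸ hbl).1
    have hab : a = b := by omega
    subst hab
    have h2 : c₁.blocks = c₂.blocks := (List.cons.injEq _ _ _ _ ▸ hbl).2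
    simp [Composition.ext_iff, h2]
  · intro π
    have hne : π.blocks ≠ [] := by
      intro h
      have := π.blocks_sum
      rw [h] at this
      simp at this
      omega
    obtain ⟨b, t, hbt⟩ := List.exists_cons_of_ne_nil hne
    have hsum : b + t.sum = n := by
      have := π.blocks_sum; rw [hbt] at this; simpa using this
    have hbpos : 0 < b := π.blocks_pos (by rw [hbt]; exact List.mem_cons_self)
    have hk : n - b < n := by omega
    refine ⟨⟨⟨n - b, hk⟩, ⟨t, ?_, show t.sum = n - b by omega⟩⟩, ?_⟩
    · intro i hi; exact π.blocks_pos (by rw [hbt]; exact List.mem_cons_of_mem _ hi)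
    · apply Composition.ext
      simp only [consComp, hbt, Fin.val_mk]
      congr 1
      omega

theorem comp0_blocks (c : Composition 0) : c.blocks = [] := by
  have hs := c.blocks_sum
  by_contra h
  obtain ⟨b, t, hbt⟩ := List.exists_cons_of_ne_nil h
  have : 0 < b := c.blocks_pos (by rw [hbt]; exact List.mem_cons_self)
  rw [hbt] at hs
  simp at hs
  omega

theorem comp0_eq (c d : Composition 0) : c = d :=
  Composition.ext (by rw [comp0_blocks, comp0_blocks])

noncomputable def S (n : ℕ) : ℤ :=
  ∑ π : Composition n,
    (-1 : ℤ) ^ (π.length + 1) * (π.blocks.map fun k => (catalan k : ℤ)).prod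

theorem S_zero : S 0 = -1 := by
  rw [S]
  rw [Fintype.sum_eq_single (default : Composition 0)]
  · simp [Composition.length, comp0_blocks]
  · intro c hc
    exact absurd (comp0_eq c default) hc

theorem S_rec (n : ℕ) (hn : 1 ≤ n) :
    S n = ∑ k : Fin n, -(catalan (n - k) : ℤ) * S k := by
  rw [S, ← Fintype.sum_bijective _ (consComp_bijective n hn) _ _ (fun x => rfl)]
  rw [← Finset.univ_sigma_univ, Finset.sum_sigma]
  refine Finset.sum_congr rfl fun k _ => ?_
  rw [S, Finset.mul_sum]
  refine Finset.sum_congr rfl fun c _ => ?_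
  have hlen : (consComp n ⟨k, c⟩).length = c.length + 1 := by
    simp [consComp, Composition.length]
  have hbl : (consComp n ⟨k, c⟩).blocks = (n - (k : ℕ)) :: c.blocks := rfl
  rw [hlen, hbl]
  simp [pow_succ]
  ring

theorem S_eq : ∀ n : ℕ, 1 ≤ n → S n = (catalan (n - 1) : ℤ) := by
  intro n
  induction n using Nat.strong_induction_on with
  | _ n ih =>
    intro hn
    obtain ⟨m, rfl⟩ : ∃ m, n = m + 1 := ⟨n - 1, by omega⟩
    rw [S_rec _ hn]
    rw [Fin.sum_univ_eq_sum_range (fun k => -(catalan (m + 1 - k) : ℤ) * S k) (m + 1)]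
    rw [Finset.sum_range_succ']
    have h1 : ∀ i ∈ Finset.range m, -(catalan (m + 1 - (i + 1)) : ℤ) * S (i + 1)
        = -((catalan i : ℤ) * (catalan (m - i) : ℤ)) := by
      intro i hi
      rw [Finset.mem_range] at hi
      rw [ih (i + 1) (by omega) (by omega)]
      simp only [Nat.add_sub_cancel]
      have hmi : m + 1 - (i + 1) = m - i := by omega
      rw [hmi]; ring
    rw [Finset.sum_congr rfl h1, S_zero]
    have h2 : (catalan (m + 1) : ℤ)
        = ∑ i ∈ Finset.range (m + 1), (catalan i : ℤ) * (catalan (m - i) : ℤ) := by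
      rw [catalan_succ]
      push_cast
      rw [Fin.sum_univ_eq_sum_range (fun i => (catalan i : ℤ) * (catalan (m - i) : ℤ)) (m + 1)]
    rw [Finset.sum_range_succ] at h2
    simp only [Nat.sub_self, catalan_zero, Nat.cast_one, mul_one] at h2
    simp only [Nat.add_sub_cancel, Nat.sub_zero]
    rw [Finset.sum_neg_distrib]
    linarith [h2]

/-- Inverse composition identity for Catalan numbers:
`C_{n-1} = ∑_{m=1}^n (-1)^{m+1} ∑_{k₁+⋯+k_m=n, kᵢ≥1} C_{k₁}⋯C_{k_m}`. -/
theorem catalan_inverse_sum_over_compositions :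
    ∀ n : ℕ, 1 ≤ n →
      (catalan (n - 1) : ℤ) =
        ∑ π : Composition n,
          (-1 : ℤ) ^ (π.length + 1) * (π.blocks.map fun k => (catalan k : ℤ)).prod := by
  intro n hn
  exact (S_eq n hn).symm
end

section
/- For n ≥ 1, the n-th Bernoulli number satisfies B_n/n! = Σ_{π∈C(n)} (-1)^{|π|} / (π+1)!, where for π = (k_1,...,k_m), (π+1)! = (k_1+1)!···(k_m+1)! and |π| = m. -/
open Finset Nat

noncomputable def fco (n : ℕ) : ℚ :=
  ∑ π : Composition n,
    (-1 : ℚ) ^ π.length / (π.blocks.map fun k => ((k + 1)! : ℚ)).prod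

lemma comp0_blocks_s6 (π : Composition 0) : π.blocks = [] := by
  cases h : π.blocks with
  | nil => rfl
  | cons a t =>
    have ha : 0 < a := π.blocks_pos (by rw [h]; exact List.mem_cons_self)
    have hs := π.blocks_sum
    rw [h] at hs
    simp at hs
    omega

lemma fco_zero : fco 0 = 1 := by
  haveI : Unique (Composition 0) :=
    { default := Composition.ones 0
      uniq := fun π => by
        ext1
        rw [comp0_blocks_s6 π]
        rfl }
  rw [fco, Fintype.sum_unique]
  simp [← Composition.blocks_length, comp0_blocks_s6]

def peel (n : ℕ) : Composition (n + 1) ≃ Σ j : Fin (n + 1), Composition j.val where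
  toFun π :=
    have hne : π.blocks ≠ [] := by
      intro h
      have := π.blocks_sum
      simp [h] at this
    have hh : 0 < π.blocks.head hne := π.blocks_pos (List.head_mem hne)
    have hs : π.blocks.head hne + π.blocks.tail.sum = n + 1 := by
      have h := List.cons_head_tail hne
      have h2 : (π.blocks.head hne :: π.blocks.tail).sum = n + 1 := by
        rw [h, π.blocks_sum]
      rw [List.sum_cons] at h2
      exact h2
    ⟨⟨π.blocks.tail.sum, by omega⟩,
      ⟨π.blocks.tail, fun hi => π.blocks_pos (List.mem_of_mem_tail hi), rfl⟩⟩
  invFun x :=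
    ⟨(n + 1 - x.1.val) :: x.2.blocks,
      by
        intro i hi
        rcases List.mem_cons.1 hi with rfl | hi
        · have := x.1.isLt; omega
        · exact x.2.blocks_pos hi,
      by
        have h1 := x.2.blocks_sum
        have h2 := x.1.isLt
        simp only [List.sum_cons, h1]
        omega⟩
  left_inv π := by
    have hne : π.blocks ≠ [] := by
      intro h
      have := π.blocks_sum
      simp [h] at this
    have hh : 0 < π.blocks.head hne := π.blocks_pos (List.head_mem hne)
    have hs : π.blocks.head hne + π.blocks.tail.sum = n + 1 := by
      have h := List.cons_head_tail hne
      have h2 : (π.blocks.head hne :: π.blocks.tail).sum = n + 1 := by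
        rw [h, π.blocks_sum]
      rw [List.sum_cons] at h2
      exact h2
    ext1
    simp only
    conv_rhs => rw [← List.cons_head_tail hne]
    congr 1
    omega
  right_inv x := by
    rcases x with ⟨⟨j, hj⟩, bl, hpos, hsum⟩
    simp only [Fin.val_mk] at hsum
    subst hsum
    rfl

lemma fco_rec (n : ℕ) :
    fco (n + 1) = -∑ j : Fin (n + 1), fco j.val / ((n + 2 - j.val)! : ℚ) := by
  rw [fco, ← Equiv.sum_comp (peel n).symm]
  rw [← Finset.univ_sigma_univ, Finset.sum_sigma]
  rw [← Finset.sum_neg_distrib]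
  apply Finset.sum_congr rfl
  intro j _
  rw [fco, ← neg_div, ← Finset.sum_neg_distrib, Finset.sum_div]
  apply Finset.sum_congr rfl
  intro c _
  have hlen : ((peel n).symm ⟨j, c⟩).length = c.length + 1 := by
    simp [peel, Composition.length]
  have hbl : ((peel n).symm ⟨j, c⟩).blocks = (n + 1 - j.val) :: c.blocks := rfl
  rw [hlen, hbl]
  have hj : j.val < n + 1 := j.isLt
  have h2 : n + 1 - j.val + 1 = n + 2 - j.val := by omega
  rw [List.map_cons, List.prod_cons, h2]
  have hfac : ((n + 2 - j.val)! : ℚ) ≠ 0 := by positivity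
  have hprod : (List.map (fun k => ((k + 1)! : ℚ)) c.blocks).prod ≠ 0 := by
    apply List.prod_ne_zero
    intro hx
    simp only [List.mem_map] at hx
    obtain ⟨k, -, hk⟩ := hx
    have : ((k + 1)! : ℚ) ≠ 0 := by positivity
    exact this hk
  field_simp
  ring

lemma bernoulli_eq_fco : ∀ n : ℕ, bernoulli n / (n ! : ℚ) = fco n := by
  intro n
  induction n using Nat.strong_induction_on with
  | _ n ih =>
    match n with
    | 0 => simp [fco_zero]
    | (m + 1) =>
      rw [fco_rec]
      have hb := sum_bernoulli (m + 2)
      rw [if_neg (by omega)] at hb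
      rw [Finset.sum_range_succ] at hb
      have hchoose : ((m + 2).choose (m + 1) : ℚ) = (m + 2 : ℕ) := by
        rw [Nat.choose_succ_self_right]
      rw [hchoose] at hb
      have hb2 : ((m + 2 : ℕ) : ℚ) * bernoulli (m + 1) =
          -∑ k ∈ range (m + 1), ((m + 2).choose k : ℚ) * bernoulli k := by
        linarith
      rw [Fin.sum_univ_eq_sum_range fun j => fco j / (((m + 2 - j))! : ℚ)]
      have key : ∀ j ∈ range (m + 1),
          fco j / ((m + 2 - j)! : ℚ) =
            ((m + 2).choose j : ℚ) * bernoulli j / ((m + 2)! : ℚ) := by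
        intro j hj
        have hjm : j < m + 1 := Finset.mem_range.1 hj
        rw [← ih j (by omega)]
        have : ((m + 2).choose j : ℚ) = ((m + 2)! : ℚ) / ((j ! : ℚ) * ((m + 2 - j)! : ℚ)) := by
          rw [Nat.choose_eq_factorial_div_factorial (by omega)]
          rw [Nat.cast_div]
          · push_cast; ring
          · exact Nat.factorial_mul_factorial_dvd_factorial (by omega)
          · have h1 : (j ! : ℚ) ≠ 0 := by positivity
            have h2 : ((m + 2 - j)! : ℚ) ≠ 0 := by positivity
            push_cast
            exact mul_ne_zero h1 h2
        rw [this]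
        have h1 : (j ! : ℚ) ≠ 0 := by positivity
        have h2 : ((m + 2 - j)! : ℚ) ≠ 0 := by positivity
        have h3 : ((m + 2)! : ℚ) ≠ 0 := by positivity
        field_simp
      rw [Finset.sum_congr rfl key, ← Finset.sum_div, ← neg_div, ← hb2]
      have hfact : ((m + 2)! : ℚ) = (m + 2 : ℕ) * ((m + 1)! : ℚ) := by
        rw [Nat.factorial_succ]; push_cast; ring
      rw [hfact]
      have h1 : ((m + 1)! : ℚ) ≠ 0 := by positivity
      have h2 : ((m + 2 : ℕ) : ℚ) ≠ 0 := by positivity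
      field_simp

/-- `Bₙ/n! = ∑_{π ∈ C(n)} (-1)^{|π|} / (π+1)!` where `(π+1)! = ∏ᵢ (kᵢ+1)!`.
Here `bernoulli` is Mathlib's Bernoulli number with generating function `z/(eᶻ-1)`. -/
theorem bernoulli_sum_over_compositions :
    ∀ n : ℕ, 1 ≤ n →
      bernoulli n / (n ! : ℚ) =
        ∑ π : Composition n,
          (-1 : ℚ) ^ π.length / (π.blocks.map fun k => ((k + 1)! : ℚ)).prod := by
  intro n _
  exact bernoulli_eq_fco n
end

section
/- For n ≥ 1, B_n = Σ_{p=1}^n (-1)^p · S(n+p, p) / binom(n+p, p) · binom(n+1, p+1), where S denotes Stirling numbers of the second kind. -/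
open Finset Nat

def stirling2 : ℕ → ℕ → ℕ
  | 0, 0 => 1
  | 0, _ + 1 => 0
  | _ + 1, 0 => 0
  | n + 1, k + 1 => (k + 1) * stirling2 n (k + 1) + stirling2 n k

lemma stirling2_zero_succ (k : ℕ) : stirling2 0 (k + 1) = 0 := rfl
lemma stirling2_succ_zero (n : ℕ) : stirling2 (n + 1) 0 = 0 := rfl
lemma stirling2_succ_succ (n k : ℕ) :
    stirling2 (n + 1) (k + 1) = (k + 1) * stirling2 n (k + 1) + stirling2 n k := rfl

lemma stirling2_eq_zero_of_lt : ∀ {n k : ℕ}, n < k → stirling2 n k = 0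
  | 0, _ + 1, _ => rfl
  | n + 1, k + 1, h => by
    rw [stirling2_succ_succ, stirling2_eq_zero_of_lt (show n < k + 1 by omega),
        stirling2_eq_zero_of_lt (show n < k by omega)]
    ring

lemma stirling2_sum (m p : ℕ) :
    stirling2 (m + 1) (p + 1) = ∑ j ∈ range (m + 1), m.choose j * stirling2 j p := by
  induction m generalizing p with
  | zero => cases p <;> simp [stirling2_succ_succ, stirling2_zero_succ]
  | succ m ih =>
    have hsplit : ∀ i, (m + 1).choose (i + 1) * stirling2 (i + 1) p
        = m.choose i * stirling2 (i + 1) p + m.choose (i + 1) * stirling2 (i + 1) p := by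
      intro i; rw [Nat.choose_succ_succ, Nat.add_mul]
    have hA : (∑ i ∈ range (m + 1), m.choose (i + 1) * stirling2 (i + 1) p)
        + stirling2 0 p = stirling2 (m + 1) (p + 1) := by
      have h0 : stirling2 0 p = m.choose 0 * stirling2 0 p := by
        rw [Nat.choose_zero_right, Nat.one_mul]
      rw [h0, ← Finset.sum_range_succ' (fun j => m.choose j * stirling2 j p) (m + 1),
          Finset.sum_range_succ, Nat.choose_succ_self, Nat.zero_mul, Nat.add_zero, ← ih]
    rw [Finset.sum_range_succ']
    simp only [hsplit, Finset.sum_add_distrib, Nat.choose_zero_right, Nat.one_mul]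
    have hMain : stirling2 (m + 1 + 1) (p + 1)
        = (∑ i ∈ range (m + 1), m.choose i * stirling2 (i + 1) p)
          + stirling2 (m + 1) (p + 1) := by
      cases p with
      | zero =>
        have e0 := stirling2_succ_succ (m + 1) 0
        have hz : ∑ i ∈ range (m + 1), m.choose i * stirling2 (i + 1) 0 = 0 := by
          apply Finset.sum_eq_zero
          intro i _; rw [stirling2_succ_zero, Nat.mul_zero]
        simp only [Nat.zero_add, stirling2_succ_zero, Nat.one_mul, Nat.add_zero] at e0 ⊢
        simpa using e0
      | succ q =>
        have hr : ∀ i, m.choose i * stirling2 (i + 1) (q + 1)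
            = (q + 1) * (m.choose i * stirling2 i (q + 1)) + m.choose i * stirling2 i q := by
          intro i; rw [stirling2_succ_succ]; ring
        have e1 := stirling2_succ_succ (m + 1) (q + 1)
        rw [add_mul, one_mul] at e1
        simp only [hr, Finset.sum_add_distrib, ← Finset.mul_sum, ← ih]
        linarith
    linarith

lemma stirling2_conv (n p : ℕ) :
    ∑ k ∈ range (n + 1), (n + p + 1).choose (k + p) * stirling2 (k + p) p
      = (p + 1) * stirling2 (n + p + 1) (p + 1) := by
  have h := stirling2_sum (n + p + 1) p
  rw [Finset.sum_range_succ] at h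
  rw [show n + p + 1 = p + (n + 1) by ring] at h
  rw [Finset.sum_range_add (fun j => (p + (n + 1)).choose j * stirling2 j p) p (n + 1)] at h
  have hz : ∑ j ∈ range p, (p + (n + 1)).choose j * stirling2 j p = 0 := by
    apply Finset.sum_eq_zero
    intro j hj
    rw [stirling2_eq_zero_of_lt (Finset.mem_range.mp hj), Nat.mul_zero]
  rw [hz, Nat.zero_add] at h
  simp only [show p + (n + 1) = n + p + 1 by ring] at h
  have hrec : stirling2 (n + p + 1 + 1) (p + 1)
      = (p + 1) * stirling2 (n + p + 1) (p + 1) + stirling2 (n + p + 1) p :=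
    stirling2_succ_succ (n + p + 1) p
  have hc : ∀ k, (n + p + 1).choose (p + k) * stirling2 (p + k) p
      = (n + p + 1).choose (k + p) * stirling2 (k + p) p := by
    intro k; rw [show p + k = k + p by ring]
  simp only [hc] at h
  rw [Nat.choose_self, Nat.one_mul] at h
  linarith [h, hrec]

noncomputable def Gs : PowerSeries ℚ := PowerSeries.mk fun k => 1 / (k + 1) !

lemma coeff_Gs (k : ℕ) : PowerSeries.coeff k Gs = 1 / (k + 1) ! :=
  PowerSeries.coeff_mk k _

lemma coeff_Gs_pow (p n : ℕ) :
    PowerSeries.coeff n (Gs ^ p) = p ! * stirling2 (n + p) p / (n + p) ! := by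
  induction p generalizing n with
  | zero =>
    cases n with
    | zero => simp [stirling2]
    | succ m => simp [stirling2_succ_zero]
  | succ p ih =>
    rw [pow_succ, PowerSeries.coeff_mul, Finset.Nat.sum_antidiagonal_eq_sum_range_succ_mk]
    simp only [ih, coeff_Gs]
    have hterm : ∀ k ∈ range (n + 1),
        ((p ! : ℚ) * stirling2 (k + p) p / (k + p) !) * (1 / (n - k + 1) !)
          = p ! * ((n + p + 1).choose (k + p) * stirling2 (k + p) p : ℕ) / (n + p + 1) ! := by
      intro k hk
      have hk' : k ≤ n := Finset.mem_range_succ_iff.mp hk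
      have hfac : ((n + p + 1).choose (k + p)) * (k + p) ! * (n - k + 1) ! = (n + p + 1) ! := by
        have := Nat.choose_mul_factorial_mul_factorial (show k + p ≤ n + p + 1 by omega)
        rwa [show n + p + 1 - (k + p) = n - k + 1 by omega] at this
      have hfacQ : ((n + p + 1).choose (k + p) : ℚ) * (k + p) ! * (n - k + 1) ! = (n + p + 1) ! := by
        exact_mod_cast congrArg (Nat.cast (R := ℚ)) hfac
      have h1 : ((k + p) ! : ℚ) ≠ 0 := Nat.cast_ne_zero.mpr (Nat.factorial_ne_zero _)
      have h2 : ((n - k + 1) ! : ℚ) ≠ 0 := Nat.cast_ne_zero.mpr (Nat.factorial_ne_zero _)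
      have h3 : ((n + p + 1) ! : ℚ) ≠ 0 := Nat.cast_ne_zero.mpr (Nat.factorial_ne_zero _)
      push_cast
      field_simp
      rw [← hfacQ]; ring
    rw [Finset.sum_congr rfl hterm, ← Finset.sum_div, ← Finset.mul_sum, ← Nat.cast_sum,
        stirling2_conv n p]
    rw [show n + (p + 1) = n + p + 1 by ring, Nat.factorial_succ p]
    push_cast
    ring

lemma X_mul_Gs : PowerSeries.X * Gs = PowerSeries.exp ℚ - 1 := by
  ext n
  cases n with
  | zero =>
    simp [PowerSeries.coeff_zero_eq_constantCoeff, PowerSeries.exp]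
  | succ m =>
    rw [PowerSeries.coeff_succ_X_mul, coeff_Gs, map_sub, PowerSeries.coeff_exp]
    simp [PowerSeries.coeff_one, Nat.factorial_succ]

lemma bern_mul_Gs : bernoulliPowerSeries ℚ * Gs = 1 := by
  have h := bernoulliPowerSeries_mul_exp_sub_one ℚ
  rw [← X_mul_Gs] at h
  apply mul_left_cancel₀ (PowerSeries.X_ne_zero : (PowerSeries.X : PowerSeries ℚ) ≠ 0)
  rw [mul_one, show PowerSeries.X * (bernoulliPowerSeries ℚ * Gs)
      = bernoulliPowerSeries ℚ * (PowerSeries.X * Gs) by ring, h]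

noncomputable def Ds : PowerSeries ℚ := Gs - 1

lemma Ds_def : Ds = Gs - 1 := rfl

lemma constantCoeff_Ds : PowerSeries.constantCoeff Ds = 0 := by
  have : PowerSeries.constantCoeff Gs = 1 := by
    have := coeff_Gs 0
    rw [PowerSeries.coeff_zero_eq_constantCoeff] at this
    simpa using this
  rw [Ds_def, map_sub, this, map_one, sub_self]

lemma coeff_mul_Ds_pow_eq_zero {n k : ℕ} (h : n < k) (f : PowerSeries ℚ) :
    PowerSeries.coeff n (f * Ds ^ k) = 0 := by
  obtain ⟨c, hc⟩ := pow_dvd_pow_of_dvd (PowerSeries.X_dvd_iff.mpr constantCoeff_Ds) k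
  rw [hc, show f * (PowerSeries.X ^ k * c) = PowerSeries.X ^ k * (c * f) by ring,
      PowerSeries.coeff_X_pow_mul']
  simp [Nat.not_le.mpr h]

lemma coeff_bern (n : ℕ) :
    (bernoulli n : ℚ) / n ! = ∑ k ∈ range (n + 1), (-1 : ℚ) ^ k * PowerSeries.coeff n (Ds ^ k) := by
  have hgeom := geom_sum_mul (-Ds) (n + 1)
  have hBG : bernoulliPowerSeries ℚ * (1 + Ds) = 1 := by
    rw [show (1 : PowerSeries ℚ) + Ds = Gs by rw [Ds_def]; ring]
    exact bern_mul_Gs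
  have key : bernoulliPowerSeries ℚ
      = (∑ i ∈ range (n + 1), (-Ds) ^ i) + bernoulliPowerSeries ℚ * (-Ds) ^ (n + 1) := by
    linear_combination (bernoulliPowerSeries ℚ) * hgeom
      + (∑ i ∈ range (n + 1), (-Ds) ^ i) * hBG
  have hni : ∀ i : ℕ, (-Ds) ^ i = PowerSeries.C ((-1 : ℚ) ^ i) * Ds ^ i := by
    intro i
    rw [neg_pow, map_pow, map_neg, map_one]
  have hcoeff := congrArg (PowerSeries.coeff n) key
  rw [map_add, map_sum] at hcoeff
  have hlast : PowerSeries.coeff n (bernoulliPowerSeries ℚ * (-Ds) ^ (n + 1)) = 0 := by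
    rw [hni, show bernoulliPowerSeries ℚ * (PowerSeries.C ((-1 : ℚ) ^ (n + 1)) * Ds ^ (n + 1))
        = (bernoulliPowerSeries ℚ * PowerSeries.C ((-1 : ℚ) ^ (n + 1))) * Ds ^ (n + 1) by ring]
    exact coeff_mul_Ds_pow_eq_zero (Nat.lt_succ_self n) _
  rw [hlast, add_zero] at hcoeff
  have hB : PowerSeries.coeff n (bernoulliPowerSeries ℚ) = (bernoulli n : ℚ) / n ! := by
    simp [bernoulliPowerSeries, PowerSeries.coeff_mk]
  rw [hB] at hcoeff
  rw [hcoeff]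
  apply Finset.sum_congr rfl
  intro i _
  rw [hni, PowerSeries.coeff_C_mul]

lemma coeff_Gs_pow_eq_sum {p n : ℕ} (hpn : p ≤ n) :
    PowerSeries.coeff n (Gs ^ p)
      = ∑ k ∈ range (n + 1), (p.choose k : ℚ) * PowerSeries.coeff n (Ds ^ k) := by
  have hG : Gs = Ds + 1 := by rw [Ds_def]; ring
  rw [hG, add_pow, map_sum]
  have hterm : ∀ k ∈ range (p + 1),
      PowerSeries.coeff n (Ds ^ k * 1 ^ (p - k) * ((p.choose k : ℕ) : PowerSeries ℚ))
        = (p.choose k : ℚ) * PowerSeries.coeff n (Ds ^ k) := by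
    intro k _
    rw [one_pow, mul_one, ← map_natCast (PowerSeries.C) (p.choose k),
        PowerSeries.coeff_mul_C]
    ring
  rw [Finset.sum_congr rfl hterm]
  apply Finset.sum_subset (Finset.range_subset_range.mpr (by omega))
  intro k _ hk
  rw [Nat.choose_eq_zero_of_lt (by simpa using hk)]
  simp

lemma alt_sum_Q {m : ℕ} (hm : m ≠ 0) :
    ∑ i ∈ range (m + 1), (-1 : ℚ) ^ i * (m.choose i) = 0 := by
  have h := Int.alternating_sum_range_choose_of_ne hm
  have h2 := congrArg (fun z : ℤ => (z : ℚ)) h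
  push_cast at h2
  simpa using h2

lemma lemB : ∀ n : ℕ, ∀ k ≤ n,
    ∑ p ∈ range (n + 1), (-1 : ℚ) ^ p * ((n + 1).choose (p + 1)) * (p.choose k)
      = (-1) ^ k := by
  intro n
  induction n with
  | zero =>
    intro k hk
    interval_cases k
    simp
  | succ n ih =>
    intro k hk
    rcases Nat.lt_or_ge k (n + 1) with hlt | hge
    · -- k ≤ n
      have hkn : k ≤ n := by omega
      have hsplit : ∀ p : ℕ, ((n + 1 + 1).choose (p + 1) : ℚ)
          = ((n + 1).choose (p + 1)) + ((n + 1).choose p) := by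
        intro p
        have := Nat.choose_succ_succ (n + 1) p
        push_cast [this]
        ring
      have hterm : ∀ p : ℕ, (-1 : ℚ) ^ p * ((n + 1 + 1).choose (p + 1)) * (p.choose k)
          = (-1 : ℚ) ^ p * ((n + 1).choose (p + 1)) * (p.choose k)
            + (-1 : ℚ) ^ p * ((n + 1).choose p) * (p.choose k) := by
        intro p
        rw [hsplit]
        ring
      simp only [hterm, Finset.sum_add_distrib]
      have hS1 : ∑ p ∈ range (n + 1 + 1),
          (-1 : ℚ) ^ p * ((n + 1).choose (p + 1)) * (p.choose k) = (-1) ^ k := by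
        rw [Finset.sum_range_succ, Nat.choose_succ_self]
        push_cast
        rw [ih k hkn]
        ring
      have hS2 : ∑ p ∈ range (n + 1 + 1),
          (-1 : ℚ) ^ p * ((n + 1).choose p) * (p.choose k) = 0 := by
        rw [show n + 1 + 1 = k + (n + 2 - k) by omega]
        rw [Finset.sum_range_add
          (fun p => (-1 : ℚ) ^ p * ((n + 1).choose p) * (p.choose k)) k (n + 2 - k)]
        have hz : ∑ p ∈ range k, (-1 : ℚ) ^ p * ((n + 1).choose p) * (p.choose k) = 0 := by
          apply Finset.sum_eq_zero
          intro p hp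
          rw [Nat.choose_eq_zero_of_lt (Finset.mem_range.mp hp)]
          simp
        rw [hz, zero_add]
        have hmul : ∀ j ∈ range (n + 2 - k),
            (-1 : ℚ) ^ (k + j) * ((n + 1).choose (k + j)) * ((k + j).choose k)
              = ((-1 : ℚ) ^ k * ((n + 1).choose k))
                * ((-1 : ℚ) ^ j * ((n + 1 - k).choose j)) := by
          intro j hj
          have hj' : j ≤ n + 1 - k := by
            have := Finset.mem_range.mp hj; omega
          have hcm := Nat.choose_mul (n := n + 1) (show k ≤ k + j by omega)
          rw [Nat.add_sub_cancel_left] at hcm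
          have hcmQ : ((n + 1).choose (k + j) : ℚ) * ((k + j).choose k)
              = ((n + 1).choose k) * ((n + 1 - k).choose j) := by exact_mod_cast hcm
          rw [pow_add]
          linear_combination ((-1 : ℚ) ^ k * (-1) ^ j) * hcmQ
        rw [Finset.sum_congr rfl hmul, ← Finset.mul_sum]
        rw [show n + 2 - k = (n + 1 - k) + 1 by omega]
        rw [alt_sum_Q (show n + 1 - k ≠ 0 by omega)]
        ring
      rw [hS1, hS2, add_zero]
    · -- k = n + 1
      have hk1 : k = n + 1 := by omega
      subst hk1
      rw [Finset.sum_range_succ]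
      have hz : ∑ p ∈ range (n + 1),
          (-1 : ℚ) ^ p * ((n + 1 + 1).choose (p + 1)) * (p.choose (n + 1)) = 0 := by
        apply Finset.sum_eq_zero
        intro p hp
        rw [Nat.choose_eq_zero_of_lt (Finset.mem_range.mp hp)]
        simp
      rw [hz, zero_add, Nat.choose_self, Nat.choose_self]
      simp

/-- `Bₙ = ∑_{p=1}^n (-1)^p · S(n+p, p)/binom(n+p, p) · binom(n+1, p+1)`. -/
theorem bernoulli_eq_sum_stirling_binom :
    ∀ n : ℕ, 1 ≤ n →
      bernoulli n =
        ∑ p ∈ Finset.Icc 1 n,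
          (-1 : ℚ) ^ p * (stirling2 (n + p) p : ℚ) / ((n + p).choose p : ℚ) *
            ((n + 1).choose (p + 1) : ℚ) := by
  intro n hn
  symm
  have hfne : ((n ! : ℚ)) ≠ 0 := Nat.cast_ne_zero.mpr (Nat.factorial_ne_zero n)
  have step1 : ∀ p ∈ Finset.Icc 1 n,
      (-1 : ℚ) ^ p * (stirling2 (n + p) p : ℚ) / ((n + p).choose p : ℚ) *
          ((n + 1).choose (p + 1) : ℚ)
        = ∑ k ∈ range (n + 1),
            ((-1 : ℚ) ^ p * ((n + 1).choose (p + 1) : ℚ) * (p.choose k : ℚ))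
              * ((n ! : ℚ) * PowerSeries.coeff n (Ds ^ k)) := by
    intro p hp
    obtain ⟨hp1, hpn⟩ := Finset.mem_Icc.mp hp
    have hx : (stirling2 (n + p) p : ℚ) / ((n + p).choose p : ℚ)
        = (n ! : ℚ) * PowerSeries.coeff n (Gs ^ p) := by
      rw [coeff_Gs_pow]
      have hcf : (n + p).choose p * p ! * n ! = (n + p)! := by
        have := Nat.choose_mul_factorial_mul_factorial (show p ≤ n + p by omega)
        rwa [show n + p - p = n by omega] at this
      have hcfQ : ((n + p).choose p : ℚ) * p ! * n ! = (n + p)! := by exact_mod_cast hcf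
      have hc0 : ((n + p).choose p : ℚ) ≠ 0 :=
        Nat.cast_ne_zero.mpr (Nat.choose_pos (show p ≤ n + p by omega)).ne'
      have hf1 : ((n + p)! : ℚ) ≠ 0 := Nat.cast_ne_zero.mpr (Nat.factorial_ne_zero _)
      field_simp
      rw [← hcfQ]; ring
    rw [show ((-1 : ℚ) ^ p * (stirling2 (n + p) p : ℚ) / ((n + p).choose p : ℚ) *
            ((n + 1).choose (p + 1) : ℚ))
          = ((stirling2 (n + p) p : ℚ) / ((n + p).choose p : ℚ))
              * ((-1 : ℚ) ^ p * ((n + 1).choose (p + 1) : ℚ)) by ring,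
        hx, coeff_Gs_pow_eq_sum hpn, Finset.mul_sum, Finset.sum_mul]
    apply Finset.sum_congr rfl
    intro k _
    ring
  rw [Finset.sum_congr rfl step1, Finset.sum_comm]
  have step3 : ∀ k ∈ range (n + 1),
      (∑ p ∈ Finset.Icc 1 n, ((-1 : ℚ) ^ p * ((n + 1).choose (p + 1) : ℚ) * (p.choose k : ℚ))
          * ((n ! : ℚ) * PowerSeries.coeff n (Ds ^ k)))
        = ((-1 : ℚ) ^ k - (n + 1) * ((0 : ℕ).choose k : ℚ))
            * ((n ! : ℚ) * PowerSeries.coeff n (Ds ^ k)) := by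
    intro k hk
    rw [← Finset.sum_mul]
    congr 1
    have hins : insert 0 (Finset.Icc 1 n) = range (n + 1) := by
      ext x
      simp only [Finset.mem_insert, Finset.mem_Icc, Finset.mem_range]
      omega
    have h0 : (0 : ℕ) ∉ Finset.Icc 1 n := by simp
    have hlb := lemB n k (Finset.mem_range_succ_iff.mp hk)
    rw [← hins, Finset.sum_insert h0] at hlb
    rw [pow_zero, one_mul, Nat.choose_one_right] at hlb
    push_cast at hlb ⊢
    linarith [hlb]
  rw [Finset.sum_congr rfl step3]
  have hsplit : ∀ k ∈ range (n + 1),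
      ((-1 : ℚ) ^ k - (n + 1) * ((0 : ℕ).choose k : ℚ))
          * ((n ! : ℚ) * PowerSeries.coeff n (Ds ^ k))
        = (n ! : ℚ) * ((-1 : ℚ) ^ k * PowerSeries.coeff n (Ds ^ k))
          - ((n + 1) * ((0 : ℕ).choose k : ℚ))
              * ((n ! : ℚ) * PowerSeries.coeff n (Ds ^ k)) := by
    intro k _
    ring
  rw [Finset.sum_congr rfl hsplit, Finset.sum_sub_distrib, ← Finset.mul_sum, ← coeff_bern]
  have hz : ∑ k ∈ range (n + 1),
      ((n + 1) * ((0 : ℕ).choose k : ℚ)) * ((n ! : ℚ) * PowerSeries.coeff n (Ds ^ k)) = 0 := by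
    apply Finset.sum_eq_zero
    intro k _
    cases k with
    | zero =>
      have hc : PowerSeries.coeff n (Ds ^ 0) = 0 := by
        rw [pow_zero, PowerSeries.coeff_one]
        simp [Nat.one_le_iff_ne_zero.mp hn]
      rw [hc]
      ring
    | succ m => simp
  rw [hz, sub_zero]
  field_simp
end

section
/- For positive integers n and p, Σ_{k_1+...+k_p = n, k_i ≥ 0} multinomial(n; k_1,...,k_p) · 1/((k_1+1)···(k_p+1)) = n!·p!/(n+p)! · S(n+p, p), where S denotes the Stirling number of the second kind. -/
open Finset Nat

theorem multinomial_eq_of_zero_outside {ι : Type*} [DecidableEq ι] {s t : Finset ι} (hts : t ⊆ s)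
    (f : ι → ℕ) (hf : ∀ a ∈ s, a ∉ t → f a = 0) :
    Nat.multinomial s f = Nat.multinomial t f := by
  have hP : 0 < ∏ i ∈ s, (f i)! := Finset.prod_pos fun i _ => Nat.factorial_pos _
  apply Nat.eq_of_mul_eq_mul_left hP
  have hsum : ∑ i ∈ s, f i = ∑ i ∈ t, f i :=
    (Finset.sum_subset hts (by intro x hx hx'; exact hf x hx hx')).symm
  have hprod : ∏ i ∈ s, (f i)! = ∏ i ∈ t, (f i)! := by
    refine (Finset.prod_subset hts ?_).symm
    intro x hx hx'
    rw [hf x hx hx', Nat.factorial_zero]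
  rw [Nat.multinomial_spec, hsum, hprod, Nat.multinomial_spec]

theorem multinomial_orderIsoOfFin {ι : Type*} [LinearOrder ι] {s : Finset ι} {j : ℕ} (h : s.card = j)
    (f : ι → ℕ) :
    Nat.multinomial s f = Nat.multinomial Finset.univ (fun i : Fin j => f (s.orderIsoOfFin h i)) := by
  have hP : 0 < ∏ i : Fin j, (f (s.orderIsoOfFin h i))! := Finset.prod_pos fun i _ => Nat.factorial_pos _
  apply Nat.eq_of_mul_eq_mul_left hP
  have hsum : ∑ i : Fin j, f (s.orderIsoOfFin h i) = ∑ x ∈ s, f x := by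
    rw [← Finset.sum_attach s f]
    exact Fintype.sum_equiv (s.orderIsoOfFin h).toEquiv _ _ (fun i => rfl)
  have hprod : ∏ i : Fin j, (f (s.orderIsoOfFin h i))! = ∏ x ∈ s, (f x)! := by
    rw [← Finset.prod_attach s (fun x => (f x)!)]
    exact Fintype.prod_equiv (s.orderIsoOfFin h).toEquiv _ _ (fun i => rfl)
  rw [Nat.multinomial_spec, hprod, Nat.multinomial_spec, hsum]

/-- Sum of multinomial coefficients over positive compositions of `m` into `j` parts. -/
def stirlingAuxU (m j : ℕ) : ℕ :=
  ∑ k ∈ (Finset.Nat.antidiagonalTuple j m).filter (fun k => ∀ i, k i ≠ 0),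
    Nat.multinomial Finset.univ k

theorem fiber_sum (m p j : ℕ) (s : Finset (Fin p)) (hs : s.card = j) :
    ∑ k ∈ (Finset.Nat.antidiagonalTuple p m).filter
        (fun k => Finset.univ.filter (fun i => k i ≠ 0) = s), Nat.multinomial Finset.univ k
      = stirlingAuxU m j := by
  set e := s.orderIsoOfFin hs with he
  refine Finset.sum_nbij' (i := fun k => fun i : Fin j => k (e i))
    (j := fun k' => fun x : Fin p => if hx : x ∈ s then k' (e.symm ⟨x, hx⟩) else 0)
    ?_ ?_ ?_ ?_ ?_
  · intro k hk
    rw [Finset.mem_filter] at hk ⊢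
    obtain ⟨hk1, hk2⟩ := hk
    have hmem : ∀ x : Fin p, k x ≠ 0 ↔ x ∈ s := by
      intro x
      rw [← hk2, Finset.mem_filter]
      simp
    constructor
    · rw [Finset.Nat.mem_antidiagonalTuple] at hk1 ⊢
      calc ∑ i : Fin j, k (e i) = ∑ x ∈ s.attach, k x :=
            (Fintype.sum_equiv e.toEquiv _ _ (fun i => rfl))
        _ = ∑ x ∈ s, k x := Finset.sum_attach s k
        _ = ∑ x : Fin p, k x := by
            refine Finset.sum_subset (Finset.subset_univ s) ?_
            intro x _ hx
            by_contra h
            exact hx ((hmem x).mp h)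
        _ = m := hk1
    · intro i
      exact (hmem (e i)).mpr (e i).2
  · intro k' hk'
    rw [Finset.mem_filter] at hk' ⊢
    obtain ⟨hk1, hk2⟩ := hk'
    constructor
    · rw [Finset.Nat.mem_antidiagonalTuple] at hk1 ⊢
      calc ∑ x : Fin p, (if hx : x ∈ s then k' (e.symm ⟨x, hx⟩) else 0)
          = ∑ x ∈ s, (if hx : x ∈ s then k' (e.symm ⟨x, hx⟩) else 0) := by
            refine (Finset.sum_subset (Finset.subset_univ s) ?_).symm
            intro x _ hx
            rw [dif_neg hx]
        _ = ∑ x ∈ s.attach, k' (e.symm x) := by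
            rw [← Finset.sum_attach s (fun x => if hx : x ∈ s then k' (e.symm ⟨x, hx⟩) else 0)]
            refine Finset.sum_congr rfl ?_
            intro x _
            rw [dif_pos x.2]
        _ = ∑ x : {y // y ∈ s}, k' (e.symm x) := by rw [← Finset.attach_eq_univ]
        _ = ∑ i : Fin j, k' i :=
            (Fintype.sum_equiv e.toEquiv _ _ (fun i => by simp)).symm
        _ = m := hk1
    · ext x
      simp only [Finset.mem_filter, Finset.mem_univ, true_and]
      constructor
      · intro hx
        by_contra h
        rw [dif_neg h] at hx
        exact hx rfl
      · intro hx
        rw [dif_pos hx]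
        exact hk2 _
  · intro k hk
    rw [Finset.mem_filter] at hk
    have hmem : ∀ x : Fin p, k x ≠ 0 ↔ x ∈ s := by
      intro x
      rw [← hk.2, Finset.mem_filter]
      simp
    funext x
    dsimp only
    by_cases hx : x ∈ s
    · rw [dif_pos hx]
      congr 1
      have : (⟨x, hx⟩ : {y // y ∈ s}) = e (e.symm ⟨x, hx⟩) := (e.apply_symm_apply _).symm
      exact congrArg Subtype.val this.symm
    · rw [dif_neg hx]
      by_contra h
      exact hx ((hmem x).mp (Ne.symm h))
  · intro k' _
    funext i
    dsimp only
    rw [dif_pos (e i).2]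
    congr 1
    rw [Subtype.coe_eta, e.symm_apply_apply]
  · intro k hk
    rw [Finset.mem_filter] at hk
    have hmem : ∀ x : Fin p, x ∈ s → k x ≠ 0 := fun x hx => by
      rw [← hk.2, Finset.mem_filter] at hx; exact hx.2
    have h1 : Nat.multinomial Finset.univ k = Nat.multinomial s k := by
      refine multinomial_eq_of_zero_outside (Finset.subset_univ s) k ?_
      intro a _ ha
      by_contra h
      have : a ∈ Finset.univ.filter (fun i => k i ≠ 0) := by
        rw [Finset.mem_filter]; exact ⟨Finset.mem_univ a, h⟩
      rw [hk.2] at this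
      exact ha this
    rw [h1, multinomial_orderIsoOfFin hs k]

theorem pow_eq_sum_U (m p : ℕ) :
    p ^ m = ∑ j ∈ Finset.range (p + 1), p.choose j * stirlingAuxU m j := by
  have h0 : (p : ℕ) ^ m = ∑ k ∈ Finset.Nat.antidiagonalTuple p m,
      Nat.multinomial Finset.univ k := by
    have := Finset.sum_pow_eq_sum_piAntidiag (Finset.univ : Finset (Fin p)) (fun _ => (1 : ℕ)) m
    simp only [Finset.sum_const, Finset.card_univ, Fintype.card_fin, smul_eq_mul, mul_one,
      one_pow, Finset.prod_const_one] at this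
    rw [Finset.piAntidiag_univ_fin_eq_antidiagonalTuple m p] at this
    exact this
  have h1 : ∑ k ∈ Finset.Nat.antidiagonalTuple p m, Nat.multinomial Finset.univ k
      = ∑ s ∈ (Finset.univ : Finset (Fin p)).powerset,
          ∑ k ∈ (Finset.Nat.antidiagonalTuple p m).filter
            (fun k => Finset.univ.filter (fun i => k i ≠ 0) = s),
            Nat.multinomial Finset.univ k := by
    exact (Finset.sum_fiberwise_of_maps_to (fun k _ => Finset.mem_powerset.mpr
      (Finset.filter_subset _ _)) _).symm
  have h2 : ∀ s ∈ (Finset.univ : Finset (Fin p)).powerset,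
      (∑ k ∈ (Finset.Nat.antidiagonalTuple p m).filter
        (fun k => Finset.univ.filter (fun i => k i ≠ 0) = s),
        Nat.multinomial Finset.univ k) = stirlingAuxU m s.card :=
    fun s _ => fiber_sum m p s.card s rfl
  rw [h0, h1, Finset.sum_congr rfl h2]
  rw [Finset.powerset_card_disjiUnion]
  erw [Finset.sum_disjiUnion]
  simp only [Finset.card_univ, Fintype.card_fin]
  refine Finset.sum_congr rfl ?_
  intro j hj
  rw [Finset.sum_congr rfl (fun s hs => by
    rw [(Finset.mem_powersetCard.mp hs).2]), Finset.sum_const, Finset.card_powersetCard,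
    Finset.card_univ, Fintype.card_fin, smul_eq_mul]

theorem pow_eq_sum_stirling (m p : ℕ) :
    p ^ m = ∑ j ∈ Finset.range (p + 1), p.choose j * (j ! * stirling2 m j) := by
  induction m generalizing p with
  | zero =>
    rw [Finset.sum_range_succ']
    simp [stirling2]
  | succ m ih =>
    rw [Finset.sum_range_succ']
    simp only [stirling2, choose_zero_right, factorial_zero, mul_zero, one_mul, add_zero]
    have key : ∀ j ∈ Finset.range p,
        p.choose (j+1) * ((j+1)! * ((j + 1) * stirling2 m (j + 1) + stirling2 m j))
        = p.choose (j+1) * ((j+1)! * ((j+1) * stirling2 m (j+1)))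
          + p.choose j * (p - j) * (j ! * stirling2 m j) := by
      intro j hj
      have e : p.choose (j+1) * (j+1)! = p.choose j * (p - j) * j ! := by
        rw [factorial_succ, ← mul_assoc, Nat.choose_succ_right_eq]
      calc p.choose (j+1) * ((j+1)! * ((j + 1) * stirling2 m (j + 1) + stirling2 m j))
          = p.choose (j+1) * ((j+1)! * ((j+1) * stirling2 m (j+1)))
            + (p.choose (j+1) * (j+1)!) * stirling2 m j := by ring
        _ = _ := by rw [e]; ring
    rw [Finset.sum_congr rfl key, Finset.sum_add_distrib]
    have h1 : ∑ j ∈ Finset.range p, p.choose (j+1) * ((j+1)! * ((j+1) * stirling2 m (j+1)))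
        = ∑ j ∈ Finset.range (p+1), j * (p.choose j * (j ! * stirling2 m j)) := by
      rw [Finset.sum_range_succ']
      simp [mul_comm, mul_assoc, mul_left_comm]
    have h2 : ∑ j ∈ Finset.range p, p.choose j * (p - j) * (j ! * stirling2 m j)
        = ∑ j ∈ Finset.range (p+1), (p - j) * (p.choose j * (j ! * stirling2 m j)) := by
      rw [Finset.sum_range_succ]
      simp [mul_comm, mul_assoc, mul_left_comm]
    rw [h1, h2, ← Finset.sum_add_distrib]
    have : ∀ j ∈ Finset.range (p+1),
        j * (p.choose j * (j ! * stirling2 m j)) + (p - j) * (p.choose j * (j ! * stirling2 m j))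
        = p * (p.choose j * (j ! * stirling2 m j)) := by
      intro j hj
      rw [← Nat.add_mul, Nat.add_sub_cancel' (Nat.lt_succ_iff.mp (Finset.mem_range.mp hj))]
    rw [Finset.sum_congr rfl this, ← Finset.mul_sum, ← ih, pow_succ, mul_comm]

theorem U_eq_stirling (m : ℕ) : ∀ p, stirlingAuxU m p = p ! * stirling2 m p := by
  intro p
  induction p using Nat.strong_induction_on with
  | _ p ih =>
    have h1 := pow_eq_sum_U m p
    have h2 := pow_eq_sum_stirling m p
    rw [h2] at h1
    rw [Finset.sum_range_succ, Finset.sum_range_succ] at h1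
    have h3 : ∑ x ∈ Finset.range p, p.choose x * stirlingAuxU m x
        = ∑ x ∈ Finset.range p, p.choose x * (x ! * stirling2 m x) :=
      Finset.sum_congr rfl (fun j hj => by rw [ih j (Finset.mem_range.mp hj)])
    rw [h3] at h1
    simpa using (Nat.add_left_cancel h1).symm

theorem shift_sum (n p : ℕ) :
    ∑ k ∈ Finset.Nat.antidiagonalTuple p n, Nat.multinomial Finset.univ (fun i => k i + 1)
      = stirlingAuxU (n + p) p := by
  unfold stirlingAuxU
  refine Finset.sum_nbij' (i := fun k => fun x : Fin p => k x + 1)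
    (j := fun k => fun x : Fin p => k x - 1) ?_ ?_ ?_ ?_ ?_
  · intro k hk
    rw [Finset.Nat.mem_antidiagonalTuple] at hk
    rw [Finset.mem_filter, Finset.Nat.mem_antidiagonalTuple]
    refine ⟨?_, fun i => Nat.succ_ne_zero _⟩
    rw [Finset.sum_add_distrib, hk, Finset.sum_const, Finset.card_univ, Fintype.card_fin,
      smul_eq_mul, mul_one]
  · intro k hk
    rw [Finset.mem_filter, Finset.Nat.mem_antidiagonalTuple] at hk
    rw [Finset.Nat.mem_antidiagonalTuple]
    have : ∑ i : Fin p, (k i - 1) + p = n + p := by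
      calc ∑ i : Fin p, (k i - 1) + p = ∑ i : Fin p, ((k i - 1) + 1) := by
            rw [Finset.sum_add_distrib, Finset.sum_const, Finset.card_univ, Fintype.card_fin,
              smul_eq_mul, mul_one]
        _ = ∑ i : Fin p, k i := Finset.sum_congr rfl fun i _ =>
            Nat.succ_pred_eq_of_pos (Nat.pos_of_ne_zero (hk.2 i))
        _ = n + p := hk.1
    exact Nat.add_right_cancel this
  · intro k _; funext x; simp
  · intro k hk
    rw [Finset.mem_filter] at hk
    funext x
    exact Nat.succ_pred_eq_of_pos (Nat.pos_of_ne_zero (hk.2 x))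
  · intro k _; rfl

/-- `∑_{k₁+⋯+k_p=n, kᵢ≥0} multinomial(n; k₁,…,k_p) / ((k₁+1)⋯(k_p+1)) = n!p!/(n+p)! · S(n+p,p)`. -/
theorem multinomial_sum_eq_stirling :
    ∀ n p : ℕ, 1 ≤ n → 1 ≤ p →
      ∑ k ∈ Finset.Nat.antidiagonalTuple p n,
          (Nat.multinomial Finset.univ k : ℚ) * ∏ i, (1 / (k i + 1) : ℚ) =
        (n ! : ℚ) * (p ! : ℚ) / ((n + p)! : ℚ) * stirling2 (n + p) p := by
  intro n p _ _
  have hterm : ∀ k ∈ Finset.Nat.antidiagonalTuple p n,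
      (Nat.multinomial Finset.univ k : ℚ) * ∏ i, (1 / (k i + 1) : ℚ)
      = (n ! : ℚ) / ((n + p)! : ℚ) *
          (Nat.multinomial Finset.univ (fun i => k i + 1) : ℚ) := by
    intro k hk
    rw [Finset.Nat.mem_antidiagonalTuple] at hk
    have hs1 : ((∏ i, (k i)! : ℕ) : ℚ) * (Nat.multinomial Finset.univ k : ℚ) = (n ! : ℚ) := by
      rw [← Nat.cast_mul, Nat.multinomial_spec, hk]
    have hs2 : ((∏ i, (k i + 1)! : ℕ) : ℚ) *
        (Nat.multinomial Finset.univ (fun i => k i + 1) : ℚ) = ((n + p)! : ℚ) := by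
      rw [← Nat.cast_mul, Nat.multinomial_spec]
      congr 2
      rw [Finset.sum_add_distrib, hk, Finset.sum_const, Finset.card_univ, Fintype.card_fin,
        smul_eq_mul, mul_one]
    push_cast at hs1 hs2
    have hfac : (∏ i, ((k i + 1)! : ℚ))
        = (∏ i, ((k i : ℚ) + 1)) * (∏ i, ((k i)! : ℚ)) := by
      rw [← Finset.prod_mul_distrib]
      refine Finset.prod_congr rfl fun i _ => ?_
      rw [Nat.factorial_succ]
      push_cast
      ring
    rw [hfac] at hs2
    have hQ : (∏ i, ((k i : ℚ) + 1)) ≠ 0 :=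
      Finset.prod_ne_zero_iff.mpr fun i _ => by positivity
    have hNP : (((n + p)! : ℕ) : ℚ) ≠ 0 := Nat.cast_ne_zero.mpr (Nat.factorial_pos _).ne'
    have hprodinv : ∏ i, (1 / ((k i : ℚ) + 1)) = (∏ i, ((k i : ℚ) + 1))⁻¹ := by
      rw [← Finset.prod_inv_distrib]
      simp [one_div]
    rw [hprodinv]
    field_simp
    linear_combination ((∏ i, ((k i : ℚ) + 1)) * (Nat.multinomial Finset.univ (fun i => k i + 1) : ℚ)) * hs1
      - (Nat.multinomial Finset.univ k : ℚ) * hs2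
  rw [Finset.sum_congr rfl hterm, ← Finset.mul_sum, ← Nat.cast_sum, shift_sum, U_eq_stirling]
  push_cast
  ring
end

section
/- For every n ≥ 1, Σ_{k=0}^{2^{n-1}-1} (-1)^{s_2(k)} / (s_2(k) + 1) = 1/n, where s_2(k) is the number of ones in the binary expansion of k. -/
open Finset Nat

private def s2 (k : ℕ) : ℕ := (Nat.digits 2 k).sum

private lemma s2_rec (n : ℕ) (h : n ≠ 0) : s2 n = n % 2 + s2 (n / 2) := by
  unfold s2
  rw [Nat.digits_def' (by norm_num) (Nat.pos_of_ne_zero h)]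
  simp

private lemma s2_pow_add (m : ℕ) : ∀ j : ℕ, j < 2 ^ m → s2 (2 ^ m + j) = s2 j + 1 := by
  induction m with
  | zero =>
      intro j hj
      interval_cases j
      simp [s2]
  | succ m ih =>
      intro j hj
      have h2 : (2 : ℕ) ^ (m + 1) = 2 * 2 ^ m := by ring
      have hne : 2 ^ (m + 1) + j ≠ 0 := by positivity
      rw [s2_rec _ hne]
      have hmod : (2 ^ (m + 1) + j) % 2 = j % 2 := by
        rw [h2, Nat.mul_add_mod]
      have hdiv : (2 ^ (m + 1) + j) / 2 = 2 ^ m + j / 2 := by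
        rw [h2, Nat.mul_add_div (by norm_num)]
      have hj2 : j / 2 < 2 ^ m := by
        rw [h2] at hj; omega
      rw [hmod, hdiv, ih _ hj2]
      rcases Nat.eq_zero_or_pos j with hj0 | hj0
      · subst hj0; simp [s2]
      · rw [s2_rec j (by omega)]; ring

private lemma key (m : ℕ) : ∀ b : ℕ,
    ∑ k ∈ Finset.range (2 ^ m),
        (-1 : ℚ) ^ (s2 k) / ((s2 k : ℚ) + b + 1) =
      (m ! * b !) / ((m + b + 1)! : ℚ) := by
  induction m with
  | zero =>
      intro b
      simp only [pow_zero, Finset.sum_range_one]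
      simp [s2, Nat.factorial_succ]
      have hb : (b ! : ℚ) ≠ 0 := by positivity
      field_simp
  | succ m ih =>
      intro b
      have hsplit : (2 : ℕ) ^ (m + 1) = 2 ^ m + 2 ^ m := by ring
      rw [hsplit, Finset.sum_range_add]
      have h2 : ∑ k ∈ Finset.range (2 ^ m),
          (-1 : ℚ) ^ (s2 (2 ^ m + k)) / ((s2 (2 ^ m + k) : ℚ) + b + 1)
          = -∑ k ∈ Finset.range (2 ^ m),
              (-1 : ℚ) ^ (s2 k) / ((s2 k : ℚ) + (b + 1) + 1) := by
        rw [← Finset.sum_neg_distrib]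
        apply Finset.sum_congr rfl
        intro k hk
        rw [s2_pow_add m k (Finset.mem_range.mp hk)]
        push_cast
        rw [pow_succ]
        ring
      have ih' := ih (b + 1)
      push_cast at ih'
      rw [h2, ih b, ih']
      have e1 : (m + (b + 1) + 1) = (m + b + 1) + 1 := by ring
      have e2 : (m + 1 + b + 1) = (m + b + 1) + 1 := by ring
      rw [e1, e2, Nat.factorial_succ (m + b + 1), Nat.factorial_succ m,
        Nat.factorial_succ b]
      have hmb : ((m + b + 1)! : ℚ) ≠ 0 := by positivity
      push_cast
      field_simp
      ring

/-- `∑_{k=0}^{2^{n-1}-1} (-1)^{s₂(k)}/(s₂(k)+1) = 1/n` where `s₂` is the binary digit sum. -/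
theorem popcount_alternating_sum :
    ∀ n : ℕ, 1 ≤ n →
      ∑ k ∈ Finset.range (2 ^ (n - 1)),
          (-1 : ℚ) ^ ((Nat.digits 2 k).sum) / ((Nat.digits 2 k).sum + 1) =
        1 / (n : ℚ) := by
  rintro ⟨_, _⟩ hn
  · omega
  · rename_i m
    have h := key m 0
    simp only [s2, Nat.cast_zero, add_zero] at h
    simp only [Nat.add_sub_cancel]
    rw [h, show m + 0 + 1 = m + 1 from by ring, Nat.factorial_succ m]
    push_cast
    have h0 : (m ! : ℚ) ≠ 0 := by positivity
    field_simp
    ring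
end

section
/- Let f(z) = Σ_{k≥1} f_k z^k be a formal power series with zero constant term. Then for every n ≥ 1, Σ_{k=0}^{2^{n-1}-1} f_{s_2(k)+1} = [z^n] f(z/(1-z)) = Σ_{k=1}^n f_k · binom(n-1, n-k). -/
open Finset PowerSeries

private lemma hockey (k : ℕ) : ∀ m : ℕ, ∑ t ∈ Finset.range m, t.choose k = m.choose (k + 1) := by
  intro m
  induction m with
  | zero => simp
  | succ m ih =>
    rw [Finset.sum_range_succ, ih, Nat.choose_succ_succ m k, Nat.add_comm]

private lemma natsum (k n : ℕ) :
    ∑ i ∈ Finset.range (n + 1), (if i = 0 ∨ n - i = 0 then 0 else (n - i - 1).choose k) =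
      (n - 1).choose (k + 1) := by
  have hrefl : ∑ i ∈ Finset.range (n + 1),
      (if i = 0 ∨ n - i = 0 then 0 else (n - i - 1).choose k) =
      ∑ j ∈ Finset.range (n + 1), (if j = 0 ∨ j = n then 0 else (j - 1).choose k) := by
    rw [← Finset.sum_range_reflect]
    refine Finset.sum_congr rfl fun j hj => ?_
    simp only [Finset.mem_range] at hj
    have h1 : n + 1 - 1 - j = n - j := by omega
    rw [h1]
    have h2 : n - (n - j) = j := by omega
    rw [h2]
    congr 1
    simp only [eq_iff_iff]
    omega
  rw [hrefl]
  cases n with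
  | zero => simp
  | succ m =>
    rw [Finset.sum_range_succ, if_pos (Or.inr rfl), add_zero, Finset.sum_range_succ']
    have hc : ∀ i ∈ Finset.range m,
        (if i + 1 = 0 ∨ i + 1 = m + 1 then 0 else (i + 1 - 1).choose k) = i.choose k := by
      intro i hi
      simp only [Finset.mem_range] at hi
      rw [if_neg (by omega)]
      simp
    rw [Finset.sum_congr rfl hc, hockey, if_pos (Or.inl rfl), add_zero]
    simp

private lemma coeffG (k : ℕ) : ∀ n : ℕ,
    (PowerSeries.coeff n) ((PowerSeries.mk fun m => if m = 0 then (0:ℚ) else 1) ^ (k + 1)) =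
      if n = 0 then 0 else ((n - 1).choose k : ℚ) := by
  induction k with
  | zero => intro n; simp [coeff_mk]
  | succ k ih =>
    intro n
    rw [pow_succ', PowerSeries.coeff_mul, Finset.Nat.sum_antidiagonal_eq_sum_range_succ_mk]
    simp only [coeff_mk, ih]
    have hc : ∀ i ∈ Finset.range (n + 1),
        (if i = 0 then (0:ℚ) else 1) * (if n - i = 0 then 0 else ((n - i - 1).choose k : ℚ)) =
        ((if i = 0 ∨ n - i = 0 then 0 else (n - i - 1).choose k : ℕ) : ℚ) := by
      intro i _
      by_cases h1 : i = 0 <;> by_cases h2 : n - i = 0 <;> simp [h1, h2]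
    rw [Finset.sum_congr rfl hc, ← Nat.cast_sum, natsum]
    cases n with
    | zero => simp
    | succ m => simp

private lemma s2_two_mul (q : ℕ) : (Nat.digits 2 (2 * q)).sum = (Nat.digits 2 q).sum := by
  rcases Nat.eq_zero_or_pos q with h | h
  · simp [h]
  · rw [Nat.digits_def' (by norm_num : 1 < 2) (by omega), List.sum_cons,
      Nat.mul_mod_right, Nat.mul_div_cancel_left _ (by norm_num : 0 < 2), Nat.zero_add]

private lemma s2_two_mul_add_one (q : ℕ) :
    (Nat.digits 2 (2 * q + 1)).sum = (Nat.digits 2 q).sum + 1 := by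
  have h1 : (2 * q + 1) % 2 = 1 := by omega
  have h2 : (2 * q + 1) / 2 = q := by omega
  rw [Nat.digits_def' (by norm_num : 1 < 2) (by omega), List.sum_cons, h1, h2, Nat.add_comm]

private lemma double_sum (F : ℕ → ℚ) : ∀ m : ℕ,
    ∑ i ∈ Finset.range (2 * m), F i = ∑ q ∈ Finset.range m, (F (2 * q) + F (2 * q + 1)) := by
  intro m
  induction m with
  | zero => simp
  | succ m ih =>
    have h : 2 * (m + 1) = (2 * m + 1) + 1 := by ring
    rw [h, Finset.sum_range_succ, Finset.sum_range_succ, ih, Finset.sum_range_succ]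
    ring

private lemma key_s16 : ∀ (n : ℕ) (g : ℕ → ℚ),
    ∑ k ∈ Finset.range (2 ^ n), g ((Nat.digits 2 k).sum) =
      ∑ j ∈ Finset.range (n + 1), (n.choose j : ℚ) * g j := by
  intro n
  induction n with
  | zero => intro g; simp
  | succ n ih =>
    intro g
    have h2 : 2 ^ (n + 1) = 2 * 2 ^ n := by ring
    have step1 : ∑ k ∈ Finset.range (2 ^ (n + 1)), g ((Nat.digits 2 k).sum) =
        ∑ j ∈ Finset.range (n + 1), (n.choose j : ℚ) * (g j + g (j + 1)) := by
      rw [h2, double_sum]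
      have hc : ∀ q ∈ Finset.range (2 ^ n),
          (g ((Nat.digits 2 (2 * q)).sum) + g ((Nat.digits 2 (2 * q + 1)).sum)) =
          g ((Nat.digits 2 q).sum) + g ((Nat.digits 2 q).sum + 1) := by
        intro q _
        rw [s2_two_mul, s2_two_mul_add_one]
      rw [Finset.sum_congr rfl hc]
      exact ih (fun j => g j + g (j + 1))
    rw [step1]
    rw [Finset.sum_range_succ' (fun j => (((n + 1).choose j : ℕ) : ℚ) * g j) (n + 1)]
    have expand : ∀ i ∈ Finset.range (n + 1),
        (((n + 1).choose (i + 1) : ℕ) : ℚ) * g (i + 1) =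
        (n.choose i : ℚ) * g (i + 1) + (n.choose (i + 1) : ℚ) * g (i + 1) := by
      intro i _
      rw [Nat.choose_succ_succ]
      push_cast
      ring
    rw [Finset.sum_congr rfl expand, Finset.sum_add_distrib]
    have h3 : ∑ i ∈ Finset.range (n + 1), (n.choose (i + 1) : ℚ) * g (i + 1) +
        (n.choose 0 : ℚ) * g 0 = ∑ j ∈ Finset.range (n + 1), (n.choose j : ℚ) * g j := by
      rw [← Finset.sum_range_succ' (fun j => ((n.choose j : ℕ) : ℚ) * g j) (n + 1),
        Finset.sum_range_succ]
      simp [Nat.choose_succ_self]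
    have h4 : ∀ j ∈ Finset.range (n + 1),
        (n.choose j : ℚ) * (g j + g (j + 1)) =
        (n.choose j : ℚ) * g j + (n.choose j : ℚ) * g (j + 1) := fun j _ => by ring
    rw [Finset.sum_congr rfl h4, Finset.sum_add_distrib, ← h3]
    simp
    ring

/-- For `f(z) = ∑_{k≥1} f_k z^k`, we have
`∑_{k=0}^{2^{n-1}-1} f_{s₂(k)+1} = [zⁿ] f(z/(1-z)) = ∑_{k=1}^n f_k binom(n-1, n-k)`.
Here `z/(1-z) = ∑_{m≥1} z^m` and `[zⁿ] f(z/(1-z)) = ∑_{k=0}^n f_k [zⁿ]((z/(1-z))^k)`. -/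
theorem popcount_sum_eq_coeff (f : ℕ → ℚ) (hf0 : f 0 = 0)
    (G : PowerSeries ℚ) (hG : G = PowerSeries.mk fun m => if m = 0 then 0 else 1) :
    ∀ n : ℕ, 1 ≤ n →
      (∑ k ∈ Finset.range (2 ^ (n - 1)), f ((Nat.digits 2 k).sum + 1) =
          ∑ k ∈ Finset.range (n + 1), f k * PowerSeries.coeff n (G ^ k)) ∧
        (∑ k ∈ Finset.range (n + 1), f k * PowerSeries.coeff n (G ^ k) =
          ∑ k ∈ Finset.Icc 1 n, f k * ((n - 1).choose (n - k) : ℚ)) := by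
  intro n hn
  obtain ⟨m, rfl⟩ : ∃ m, n = m + 1 := ⟨n - 1, by omega⟩
  have hmid : ∑ k ∈ Finset.range (m + 1 + 1), f k * PowerSeries.coeff (m + 1) (G ^ k) =
      ∑ i ∈ Finset.range (m + 1), f (i + 1) * (m.choose i : ℚ) := by
    rw [Finset.sum_range_succ'
      (fun k => f k * PowerSeries.coeff (m + 1) (G ^ k)) (m + 1)]
    rw [hf0]
    have hc : ∀ i ∈ Finset.range (m + 1),
        f (i + 1) * PowerSeries.coeff (m + 1) (G ^ (i + 1)) =
        f (i + 1) * (m.choose i : ℚ) := by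
      intro i _
      rw [hG, coeffG, if_neg (Nat.succ_ne_zero m)]
      simp
    rw [Finset.sum_congr rfl hc]
    simp
  constructor
  · have hk : ∑ k ∈ Finset.range (2 ^ m), f ((Nat.digits 2 k).sum + 1) =
        ∑ j ∈ Finset.range (m + 1), (m.choose j : ℚ) * f (j + 1) := key_s16 m (fun j => f (j + 1))
    have hm1 : m + 1 - 1 = m := rfl
    rw [hm1, hk, hmid]
    exact Finset.sum_congr rfl fun j _ => by ring
  · rw [hmid]
    rw [← Finset.Ico_add_one_right_eq_Icc, Finset.sum_Ico_eq_sum_range]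
    have hr : m + 1 + 1 - 1 = m + 1 := rfl
    rw [hr]
    refine Finset.sum_congr rfl fun i hi => ?_
    simp only [Finset.mem_range] at hi
    have h1 : m + 1 - 1 = m := rfl
    have h2 : m + 1 - (1 + i) = m - i := by omega
    rw [h1, h2, Nat.choose_symm (by omega : i ≤ m)]
    rw [Nat.add_comm 1 i]
end
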